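/- Fix 0 < 9m²Λ < 1 with m, Λ > 0. The polynomial p(r) = r - 2m - (Λ/3) r³ (equivalently the function α(r)² = 1 - 2m/r - Λr²/3 multiplied by r) has exactly two distinct positive roots r_H < r_I, and p(r) > 0 for r ∈ (r_H, r_I). -/

import Mathlib

/-!
The derivative `1 - Λ r²` of `p(r) = r - 2m - (Λ/3) r³` vanishes on `(0, ∞)` only at
`c = Λ^{-1/2}`, so `p` increases on `[0, c]` and decreases on `[c, ∞)`. Since `Λ c² = 1`,
`p(0) = -2m < 0`, `p(c) = 2c/3 - 2m`, which is positive exactly when `9m²Λ < 1`, and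
`p(2c) = -2c/3 - 2m < 0`. A continuous function with this shape has one zero on each
monotone piece and is positive between them.
-/

open Set

theorem exists_two_zeros_of_strictMonoOn_of_strictAntiOn {f : ℝ → ℝ} {a c R : ℝ}
    (hac : a ≤ c) (hcR : c ≤ R) (hf : ContinuousOn f (Ici a))
    (hmono : StrictMonoOn f (Icc a c)) (hanti : StrictAntiOn f (Ici c))
    (ha : f a < 0) (hc : 0 < f c) (hR : f R < 0) :
    ∃ x y : ℝ, a < x ∧ x < y ∧ f x = 0 ∧ f y = 0 ∧
      (∀ r, a < r → f r = 0 → r = x ∨ r = y) ∧ ∀ r ∈ Ioo x y, 0 < f r := by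
  obtain ⟨x, ⟨hax, hxc⟩, hx⟩ : ∃ x ∈ Icc a c, f x = 0 :=
    intermediate_value_Icc hac (hf.mono Icc_subset_Ici_self) ⟨ha.le, hc.le⟩
  obtain ⟨y, ⟨hcy, -⟩, hy⟩ : ∃ y ∈ Icc c R, f y = 0 :=
    intermediate_value_Icc' hcR (hf.mono (Icc_subset_Ici_self.trans (Ici_subset_Ici.2 hac)))
      ⟨hR.le, hc.le⟩
  have hax : a < x := hax.lt_of_ne (by rintro rfl; linarith)
  have hxc : x < c := hxc.lt_of_ne (by rintro rfl; linarith)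
  have hcy : c < y := hcy.lt_of_ne (by rintro rfl; linarith)
  have hx_mem : x ∈ Icc a c := ⟨hax.le, hxc.le⟩
  refine ⟨x, y, hax, hxc.trans hcy, hx, hy, fun r har hr => ?_, fun r ⟨hxr, hry⟩ => ?_⟩
  · rcases le_or_gt r c with hrc | hcr
    · exact .inl (hmono.injOn ⟨har.le, hrc⟩ hx_mem (hr.trans hx.symm))
    · exact .inr (hanti.injOn hcr.le hcy.le (hr.trans hy.symm))
  · rcases le_or_gt r c with hrc | hcr
    · exact hx ▸ hmono hx_mem ⟨hax.le.trans hxr.le, hrc⟩ hxr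
    · exact hy ▸ hanti hcr.le hcy.le hry

section CubicLapse

variable {m Λ c : ℝ}

/-- `r · α(r)²` for the de Sitter–Schwarzschild lapse `α`. -/
noncomputable def lapsePoly (m Λ r : ℝ) : ℝ := r - 2 * m - Λ / 3 * r ^ 3

theorem continuous_lapsePoly : Continuous (lapsePoly m Λ) := by
  unfold lapsePoly; fun_prop

theorem hasDerivAt_lapsePoly (r : ℝ) : HasDerivAt (lapsePoly m Λ) (1 - Λ * r ^ 2) r := by
  have h := ((hasDerivAt_id r).sub_const (2 * m)).sub ((hasDerivAt_pow 3 r).const_mul (Λ / 3))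
  exact h.congr_deriv (by push_cast; ring)

variable (hc : Λ * c ^ 2 = 1)
include hc

theorem strictMonoOn_lapsePoly (hΛ : 0 < Λ) : StrictMonoOn (lapsePoly m Λ) (Icc 0 c) := by
  refine strictMonoOn_of_deriv_pos (convex_Icc 0 c) continuous_lapsePoly.continuousOn ?_
  intro r hr
  rw [interior_Icc] at hr
  obtain ⟨hr0, hrc⟩ := hr
  rw [(hasDerivAt_lapsePoly r).deriv]
  nlinarith [mul_lt_mul_of_pos_left (mul_lt_mul'' hrc hrc hr0.le hr0.le) hΛ]

theorem strictAntiOn_lapsePoly (hΛ : 0 < Λ) (hc0 : 0 < c) : StrictAntiOn (lapsePoly m Λ) (Ici c) := by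
  refine strictAntiOn_of_deriv_neg (convex_Ici c) continuous_lapsePoly.continuousOn ?_
  intro r hr
  rw [interior_Ici, mem_Ioi] at hr
  rw [(hasDerivAt_lapsePoly r).deriv]
  nlinarith [mul_lt_mul_of_pos_left (mul_lt_mul'' hr hr hc0.le hc0.le) hΛ]

theorem lapsePoly_of_mul_sq_eq_one : lapsePoly m Λ c = 2 * c / 3 - 2 * m := by
  unfold lapsePoly
  linear_combination (-c / 3) * hc

theorem lapsePoly_two_mul_neg (hm : 0 < m) (hc0 : 0 < c) : lapsePoly m Λ (2 * c) < 0 := by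
  unfold lapsePoly
  nlinarith

end CubicLapse

/-- For `m, Λ > 0` with `9m²Λ < 1`, the polynomial `p(r) = r - 2m - (Λ/3) r³` has
exactly two distinct positive roots `r_H < r_I`, and `p > 0` on `(r_H, r_I)`. -/
theorem deSitterSchwarzschild_roots (m Λ : ℝ) (hm : 0 < m) (hΛ : 0 < Λ)
    (h9 : 9 * m^2 * Λ < 1) :
    ∃ rH rI : ℝ, 0 < rH ∧ rH < rI ∧
      (rH - 2*m - Λ/3 * rH^3 = 0) ∧ (rI - 2*m - Λ/3 * rI^3 = 0) ∧
      (∀ r : ℝ, 0 < r → r - 2*m - Λ/3 * r^3 = 0 → r = rH ∨ r = rI) ∧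
      (∀ r ∈ Set.Ioo rH rI, 0 < r - 2*m - Λ/3 * r^3) := by
  set c := (Real.sqrt Λ)⁻¹
  have hc0 : 0 < c := inv_pos.2 (Real.sqrt_pos.2 hΛ)
  have hc : Λ * c ^ 2 = 1 := by
    rw [inv_pow, Real.sq_sqrt hΛ.le, mul_inv_cancel₀ hΛ.ne']
  have hmc : 3 * m < c := by
    by_contra! hcm
    nlinarith [mul_le_mul_of_nonneg_left (pow_le_pow_left₀ hc0.le hcm 2) hΛ.le]
  have hcrit : 0 < lapsePoly m Λ c := by
    rw [lapsePoly_of_mul_sq_eq_one hc]; linarith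
  exact exists_two_zeros_of_strictMonoOn_of_strictAntiOn hc0.le (by linarith)
    continuous_lapsePoly.continuousOn (strictMonoOn_lapsePoly hc hΛ)
    (strictAntiOn_lapsePoly hc hΛ hc0) (by norm_num [lapsePoly]; linarith) hcrit
    (lapsePoly_two_mul_neg hc hm hc0)
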